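/- Let 𝒜 be an m-order n-dimensional strong M-tensor with a_{ii…i} = 1 for all i, let 1 ≤ s,k ≤ n−1, and let α_i ∈ [0,1] for i = 1,…,n−s and β_j ∈ [0,1] for j = k+1,…,n. Then the preconditioned tensor 𝒜_{αβ}(s,k) = P_{αβ}(s,k)𝒜 is a strong M-tensor. -/

import Mathlib

open scoped BigOperators

namespace MultilinearPaper

noncomputable section

/-- An `m`-order `n`-dimensional real tensor: the first index is separated and
the remaining `m - 1` indices are given as a function `Fin (m-1) → Fin n`. -/
abbrev Tensor (m n : ℕ) : Type := Fin n → (Fin (m - 1) → Fin n) → ℝ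

variable {m n : ℕ}

/-- The vector `𝒜 x^{m-1}` (real version):
`(𝒜 x^{m-1})_i = ∑_{i₂,…,i_m} a_{i i₂ … i_m} x_{i₂} ⋯ x_{i_m}`. -/
def tmul (A : Tensor m n) (x : Fin n → ℝ) : Fin n → ℝ :=
  fun i => ∑ f : Fin (m - 1) → Fin n, A i f * ∏ t, x (f t)

/-- The vector `𝒜 x^{m-1}` evaluated at a complex vector. -/
def tmulC (A : Tensor m n) (x : Fin n → ℂ) : Fin n → ℂ :=
  fun i => ∑ f : Fin (m - 1) → Fin n, (A i f : ℂ) * ∏ t, x (f t)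

/-- The identity tensor `𝓘`. -/
def idT (m n : ℕ) : Tensor m n :=
  fun i f => if ∀ t, f t = i then 1 else 0

/-- Entrywise nonnegativity of a tensor. -/
def TNonneg (A : Tensor m n) : Prop := ∀ i f, 0 ≤ A i f

/-- `lam` is an eigenvalue of `A`: there is `x ≠ 0` over `ℂ` with
`𝒜 x^{m-1} = lam • x^{[m-1]}`. -/
def IsEigenvalue (A : Tensor m n) (lam : ℂ) : Prop :=
  ∃ x : Fin n → ℂ, x ≠ 0 ∧ ∀ i, tmulC A x i = lam * (x i) ^ (m - 1)

/-- Spectral radius: supremum of moduli of eigenvalues. -/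
def rho (A : Tensor m n) : ℝ :=
  sSup {r : ℝ | ∃ lam : ℂ, IsEigenvalue A lam ∧ r = ‖lam‖}

/-- `A` is a strong M-tensor: `A = η 𝓘 - B` with `B ≥ 0` and `η > ρ(B)`. -/
def StrongM (A : Tensor m n) : Prop :=
  ∃ (η : ℝ) (B : Tensor m n), TNonneg B ∧ rho B < η ∧ A = η • idT m n - B

/-- Matrix–tensor product `(P𝓑)_{j i₂…i_m} = ∑_{j₂} P_{j j₂} b_{j₂ i₂ … i_m}`. -/
def mmul (P : Matrix (Fin n) (Fin n) ℝ) (A : Tensor m n) : Tensor m n :=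
  fun j f => ∑ j₂, P j j₂ * A j₂ f

/-- Majorization matrix `M(𝒜)_{ij} = a_{i j … j}`. -/
def maj (A : Tensor m n) : Matrix (Fin n) (Fin n) ℝ :=
  fun i j => A i (fun _ => j)

/-- `a_{i i … i} = 1` for all `i`. -/
def UnitDiag (A : Tensor m n) : Prop := ∀ i, A i (fun _ => i) = 1

/-- `L`: the negatives of the strictly lower triangular entries of `M(𝒜)`. -/
def Lmat (A : Tensor m n) : Matrix (Fin n) (Fin n) ℝ :=
  fun i j => if (j : ℕ) < (i : ℕ) then -maj A i j else 0

/-- `𝓛 = L𝓘`. -/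
def Ltens (A : Tensor m n) : Tensor m n := mmul (Lmat A) (idT m n)

/-- `𝓕 = 𝓘 - 𝓛 - 𝒜`. -/
def Ftens (A : Tensor m n) : Tensor m n := idT m n - Ltens A - A

/-- The matrix `S_α^s`, with `(S_α^s)_{i,i+s} = -α_i a_{i(i+s)…(i+s)}`. -/
def Smat (A : Tensor m n) (α : Fin n → ℝ) (s : ℕ) : Matrix (Fin n) (Fin n) ℝ :=
  fun i j => if (j : ℕ) = (i : ℕ) + s then -(α i * maj A i j) else 0

/-- The matrix `K_β^k`, with `(K_β^k)_{i,i-k} = -β_i a_{i(i-k)…(i-k)}`. -/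
def Kmat (A : Tensor m n) (β : Fin n → ℝ) (k : ℕ) : Matrix (Fin n) (Fin n) ℝ :=
  fun i j => if (i : ℕ) = (j : ℕ) + k then -(β i * maj A i j) else 0

/-- The preconditioner `P_{αβ}(s,k) = I + S_α^s + K_β^k`. -/
def Pmat (A : Tensor m n) (α β : Fin n → ℝ) (s k : ℕ) : Matrix (Fin n) (Fin n) ℝ :=
  1 + Smat A α s + Kmat A β k

/-- The preconditioned tensor `𝒜_{αβ}(s,k) = P_{αβ}(s,k) 𝒜`. -/
def precond (A : Tensor m n) (α β : Fin n → ℝ) (s k : ℕ) : Tensor m n :=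
  mmul (Pmat A α β s k) A

/- Jacobi-type splittings. -/

def E1 (A : Tensor m n) (α β : Fin n → ℝ) (s k : ℕ) : Tensor m n :=
  mmul (Pmat A α β s k) (idT m n)

def F1 (A : Tensor m n) (α β : Fin n → ℝ) (s k : ℕ) : Tensor m n :=
  mmul (Pmat A α β s k) (Ltens A + Ftens A)

def F2 (A : Tensor m n) (α β : Fin n → ℝ) (s k : ℕ) : Tensor m n :=
  mmul (Pmat A α β s k) (Ltens A + Ftens A) - mmul (Smat A α s + Kmat A β k) (idT m n)

def F3 (A : Tensor m n) (α : Fin n → ℝ) (s : ℕ) : Tensor m n :=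
  mmul (1 + Smat A α s) (Ltens A + Ftens A) - mmul (Smat A α s) (idT m n)

def F4 (A : Tensor m n) (β : Fin n → ℝ) (k : ℕ) : Tensor m n :=
  mmul (1 + Kmat A β k) (Ltens A + Ftens A) - mmul (Kmat A β k) (idT m n)

/-- `S`: the matrix `S_α^1` with all parameters equal to `1`. -/
def Sfull (A : Tensor m n) : Matrix (Fin n) (Fin n) ℝ := Smat A (fun _ => 1) 1

/-- `K`: the matrix `K_β^1` with all parameters equal to `1`. -/
def Kfull (A : Tensor m n) : Matrix (Fin n) (Fin n) ℝ := Kmat A (fun _ => 1) 1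

/-- `𝓛′` with `𝓛 = K𝓘 + 𝓛′`. -/
def Lprime (A : Tensor m n) : Tensor m n := Ltens A - mmul (Kfull A) (idT m n)

/-- `𝓕′` with `𝓕 = S𝓘 + 𝓕′`. -/
def Fprime (A : Tensor m n) : Tensor m n := Ftens A - mmul (Sfull A) (idT m n)

/-- `ℰ₅ = (I - S_α K - K_β S)𝓘`. -/
def E5 (A : Tensor m n) (α β : Fin n → ℝ) : Tensor m n :=
  mmul (1 - Smat A α 1 * Kfull A - Kmat A β 1 * Sfull A) (idT m n)

/-- `ℱ₅ = 𝓛 + 𝓕 - (S_α + K_β)𝓘 + S_α(𝓛′ + 𝓕) + K_β(𝓛 + 𝓕′)`. -/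
def F5 (A : Tensor m n) (α β : Fin n → ℝ) : Tensor m n :=
  Ltens A + Ftens A - mmul (Smat A α 1 + Kmat A β 1) (idT m n)
    + mmul (Smat A α 1) (Lprime A + Ftens A) + mmul (Kmat A β 1) (Ltens A + Fprime A)

def finShiftUp (i : Fin n) (s : ℕ) (h : (i : ℕ) + s < n) : Fin n := ⟨(i : ℕ) + s, h⟩

def finShiftDown (i : Fin n) (k : ℕ) : Fin n :=
  ⟨(i : ℕ) - k, lt_of_le_of_lt (Nat.sub_le _ _) i.isLt⟩

/-- The `i`-th quantity appearing in conditions (7) and (11):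
`α_i a_{i(i+k)…(i+k)} a_{(i+k)i…i} + β_i a_{i(i-k)…(i-k)} a_{(i-k)i…i}`,
with each term dropped when its index is out of range. -/
def condExpr (A : Tensor m n) (α β : Fin n → ℝ) (k : ℕ) (i : Fin n) : ℝ :=
  (if h : (i : ℕ) + k < n then
      α i * maj A i (finShiftUp i k h) * maj A (finShiftUp i k h) i
    else 0) +
  (if k ≤ (i : ℕ) then
      β i * maj A i (finShiftDown i k) * maj A (finShiftDown i k) i
    else 0)

/-- Conditions (7) (for `k = 1`) and (11) (for general `k = s`). -/
def Cond (A : Tensor m n) (α β : Fin n → ℝ) (k : ℕ) : Prop :=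
  ∀ i : Fin n, 0 < condExpr A α β k i ∧ condExpr A α β k i < 1

/- Gauss–Seidel-type splittings. -/

/-- The diagonal part of `M(T)` as a matrix. -/
def DmatOf (T : Tensor m n) : Matrix (Fin n) (Fin n) ℝ :=
  fun i j => if i = j then maj T i j else 0

/-- The strictly lower triangular part of `M(T)` as a matrix. -/
def LmatOf (T : Tensor m n) : Matrix (Fin n) (Fin n) ℝ :=
  fun i j => if (j : ℕ) < (i : ℕ) then maj T i j else 0

/-- `𝓓_α = D_α 𝓘` from `S_α^s 𝓛 = 𝓓_α + 𝓛_α + 𝓕_α`. -/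
def Dalpha (A : Tensor m n) (α : Fin n → ℝ) (s : ℕ) : Tensor m n :=
  mmul (DmatOf (mmul (Smat A α s) (Ltens A))) (idT m n)

def Lalpha (A : Tensor m n) (α : Fin n → ℝ) (s : ℕ) : Tensor m n :=
  mmul (LmatOf (mmul (Smat A α s) (Ltens A))) (idT m n)

def Falpha (A : Tensor m n) (α : Fin n → ℝ) (s : ℕ) : Tensor m n :=
  mmul (Smat A α s) (Ltens A) - Dalpha A α s - Lalpha A α s

/-- `𝓓_β = D_β 𝓘` from `K_β^k 𝓕 = 𝓓_β + 𝓛_β + 𝓕_β`. -/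
def Dbeta (A : Tensor m n) (β : Fin n → ℝ) (k : ℕ) : Tensor m n :=
  mmul (DmatOf (mmul (Kmat A β k) (Ftens A))) (idT m n)

def Lbeta (A : Tensor m n) (β : Fin n → ℝ) (k : ℕ) : Tensor m n :=
  mmul (LmatOf (mmul (Kmat A β k) (Ftens A))) (idT m n)

def Fbeta (A : Tensor m n) (β : Fin n → ℝ) (k : ℕ) : Tensor m n :=
  mmul (Kmat A β k) (Ftens A) - Dbeta A β k - Lbeta A β k

def M1 (A : Tensor m n) (α β : Fin n → ℝ) (s k : ℕ) : Tensor m n :=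
  mmul (Pmat A α β s k) (idT m n - Ltens A)

def N1 (A : Tensor m n) (α β : Fin n → ℝ) (s k : ℕ) : Tensor m n :=
  mmul (Pmat A α β s k) (Ftens A)

def M2 (A : Tensor m n) (α β : Fin n → ℝ) (s k : ℕ) : Tensor m n :=
  idT m n - Ltens A + mmul (Kmat A β k) (idT m n) - mmul (Kmat A β k) (Ltens A)
    - Dalpha A α s - Lalpha A α s - Dbeta A β k - Lbeta A β k

def N2 (A : Tensor m n) (α β : Fin n → ℝ) (s k : ℕ) : Tensor m n :=
  Ftens A - mmul (Smat A α s) (idT m n) + mmul (Smat A α s) (Ftens A)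
    + Falpha A α s + Fbeta A β k

def M3 (A : Tensor m n) (α : Fin n → ℝ) (s : ℕ) : Tensor m n :=
  idT m n - Ltens A - Dalpha A α s - Lalpha A α s

def N3 (A : Tensor m n) (α : Fin n → ℝ) (s : ℕ) : Tensor m n :=
  Ftens A - mmul (Smat A α s) (idT m n) + mmul (Smat A α s) (Ftens A) + Falpha A α s

def M4 (A : Tensor m n) (β : Fin n → ℝ) (k : ℕ) : Tensor m n :=
  mmul (1 + Kmat A β k) (idT m n - Ltens A) - Dbeta A β k - Lbeta A β k

def N4 (A : Tensor m n) (β : Fin n → ℝ) (k : ℕ) : Tensor m n :=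
  Ftens A + Fbeta A β k

/- Preconditioned SOR. -/

def Dab (A : Tensor m n) (α β : Fin n → ℝ) (s k : ℕ) : Tensor m n :=
  idT m n - Dalpha A α s - Dbeta A β k

def Lab (A : Tensor m n) (α β : Fin n → ℝ) (s k : ℕ) : Tensor m n :=
  Ltens A - mmul (Kmat A β k) (idT m n) + mmul (Kmat A β k) (Ltens A)
    + Lalpha A α s + Lbeta A β k

def Fab (A : Tensor m n) (α β : Fin n → ℝ) (s k : ℕ) : Tensor m n :=
  Ftens A - mmul (Smat A α s) (idT m n) + mmul (Smat A α s) (Ftens A)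
    + Falpha A α s + Fbeta A β k

def Eomega (A : Tensor m n) (α β : Fin n → ℝ) (s k : ℕ) (ω : ℝ) : Tensor m n :=
  (1 / ω) • (Dab A α β s k - ω • Lab A α β s k)

def Fomega (A : Tensor m n) (α β : Fin n → ℝ) (s k : ℕ) (ω : ℝ) : Tensor m n :=
  (1 / ω) • ((1 - ω) • Dab A α β s k + ω • Fab A α β s k)

/-- Preconditioned SOR iteration tensor `ℋ_{αβ}(ω)`. -/
def Hsor (A : Tensor m n) (α β : Fin n → ℝ) (s k : ℕ) (ω : ℝ) : Tensor m n :=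
  mmul (maj (Eomega A α β s k ω))⁻¹ (Fomega A α β s k ω)

/-- Unpreconditioned SOR iteration tensor `ℋ(ω) = M(𝓘-ω𝓛)^{-1}((1-ω)𝓘+ω𝓕)`. -/
def Hu (A : Tensor m n) (ω : ℝ) : Tensor m n :=
  mmul (maj (idT m n - ω • Ltens A))⁻¹ ((1 - ω) • idT m n + ω • Ftens A)

/-- A tensor is reducible if there is a nonempty proper index subset `I` with
`a_{i₁ i₂ … i_m} = 0` whenever `i₁ ∈ I` and `i₂, …, i_m ∉ I`. -/
def TReducible (A : Tensor m n) : Prop :=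
  ∃ I : Set (Fin n), I.Nonempty ∧ I ≠ Set.univ ∧
    ∀ i f, i ∈ I → (∀ t, f t ∉ I) → A i f = 0

lemma sum_prod_eq (y : Fin n → ℝ) :
    ∑ f : Fin (m-1) → Fin n, ∏ t, y (f t) = (∑ j, y j) ^ (m-1) := by
  rw [← Fintype.sum_pow]

lemma tmul_idT (u : Fin n → ℝ) (i : Fin n) : tmul (idT m n) u i = u i ^ (m-1) := by
  unfold tmul idT
  rw [Finset.sum_eq_single (fun _ => i)]
  · simp [Finset.prod_const]
  · intro f _ hf
    rw [if_neg, zero_mul]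
    intro h; exact hf (funext h)
  · simp

lemma tmul_mmul (P : Matrix (Fin n) (Fin n) ℝ) (A : Tensor m n) (u : Fin n → ℝ) (i : Fin n) :
    tmul (mmul P A) u i = ∑ j, P i j * tmul A u j := by
  unfold tmul mmul
  simp only [Finset.sum_mul, Finset.mul_sum, mul_assoc]
  rw [Finset.sum_comm]

lemma tmul_smul_idT_sub (c : ℝ) (X : Tensor m n) (u : Fin n → ℝ) (i : Fin n) :
    tmul (c • idT m n - X) u i = c * u i ^ (m-1) - tmul X u i := by
  have h : ∀ f, (c • idT m n - X) i f = c * idT m n i f - X i f := fun f => rfl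
  unfold tmul
  simp only [h, sub_mul, Finset.sum_sub_distrib, mul_assoc, ← Finset.mul_sum]
  rw [← tmul_idT (m := m) u i]
  rfl

lemma tmul_nonneg {B : Tensor m n} (hB : TNonneg B) {x : Fin n → ℝ} (hx : ∀ i, 0 ≤ x i)
    (i : Fin n) : 0 ≤ tmul B x i :=
  Finset.sum_nonneg fun f _ => mul_nonneg (hB i f) (Finset.prod_nonneg fun t _ => hx (f t))

lemma tmul_mono {B : Tensor m n} (hB : TNonneg B) {x y : Fin n → ℝ} (hx : ∀ i, 0 ≤ x i)
    (hxy : ∀ i, x i ≤ y i) (i : Fin n) : tmul B x i ≤ tmul B y i := by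
  apply Finset.sum_le_sum
  intro f _
  apply mul_le_mul_of_nonneg_left _ (hB i f)
  exact Finset.prod_le_prod (fun t _ => hx (f t)) (fun t _ => hxy (f t))

lemma tmul_smul (B : Tensor m n) (c : ℝ) (x : Fin n → ℝ) (i : Fin n) :
    tmul B (fun j => c * x j) i = c ^ (m-1) * tmul B x i := by
  unfold tmul
  rw [Finset.mul_sum]
  apply Finset.sum_congr rfl
  intro f _
  rw [Finset.prod_mul_distrib, Finset.prod_const]
  simp; ring

lemma exists_eigen_eps (hm : 2 ≤ m) (hn : 1 ≤ n) {B : Tensor m n} (hB : TNonneg B)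
    {η : ℝ} (hη : 0 < η)
    (hng : ∀ u : Fin n → ℝ, (∀ i, 0 < u i) → ∃ i, η * u i ^ (m-1) ≤ tmul B u i)
    {ε : ℝ} (hε : 0 < ε) (hε1 : ε ≤ 1) :
    ∃ (t : ℝ) (x : Fin n → ℝ), η ≤ t ∧ t ≤ (∑ i, ∑ f, B i f) + (n:ℝ) ^ (m-1) ∧
      (∀ i, 0 ≤ x i) ∧ (∀ i, x i ≤ 1) ∧ (∃ i, x i = 1) ∧
      ∀ i, tmul B x i + ε * (∑ j, x j) ^ (m-1) = t * x i ^ (m-1) := by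
  have hme : m - 1 ≠ 0 := by omega
  have i0 : Fin n := ⟨0, hn⟩
  have hne : (Finset.univ : Finset (Fin n)).Nonempty := ⟨i0, Finset.mem_univ _⟩
  have hnpow : (1:ℝ) ≤ (n:ℝ) ^ (m-1) := by
    apply one_le_pow₀
    exact_mod_cast hn
  set S : Set (ℝ × (Fin n → ℝ)) := {p | 0 ≤ p.1 ∧ (∀ i, p.2 i ∈ Set.Icc (0:ℝ) 1) ∧
      (∃ i, p.2 i = 1) ∧
      ∀ i, p.1 * p.2 i ^ (m-1) ≤ tmul B p.2 i + ε * (∑ j, p.2 j) ^ (m-1)} with hSdef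
  set R : ℝ := (∑ i, ∑ f, B i f) + (n:ℝ) ^ (m-1) with hRdef
  -- bound on the first coordinate of points of S
  have hsumn : ∀ x : Fin n → ℝ, (∀ i, x i ∈ Set.Icc (0:ℝ) 1) → (∑ j, x j) ^ (m-1) ≤ (n:ℝ) ^ (m-1) := by
    intro x hx
    apply pow_le_pow_left₀ (Finset.sum_nonneg fun j _ => (hx j).1)
    calc ∑ j, x j ≤ ∑ _j : Fin n, (1:ℝ) := Finset.sum_le_sum fun j _ => (hx j).2
      _ = n := by simp
  have htmul_le : ∀ (x : Fin n → ℝ), (∀ i, x i ∈ Set.Icc (0:ℝ) 1) → ∀ i,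
      tmul B x i ≤ ∑ i', ∑ f, B i' f := by
    intro x hx i
    have h1 : tmul B x i ≤ ∑ f, B i f := by
      unfold tmul
      apply Finset.sum_le_sum
      intro f _
      nth_rewrite 2 [← mul_one (B i f)]
      exact mul_le_mul_of_nonneg_left
        (Finset.prod_le_one (fun t _ => (hx (f t)).1) (fun t _ => (hx (f t)).2)) (hB i f)
    exact h1.trans (Finset.single_le_sum (f := fun i' => ∑ f, B i' f)
      (fun i' _ => Finset.sum_nonneg fun f _ => hB i' f) (Finset.mem_univ i))
  have hRbound : ∀ p ∈ S, p.1 ≤ R := by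
    rintro ⟨t, x⟩ ⟨ht0, hx, ⟨i₁, hi₁⟩, hineq⟩
    have h := hineq i₁
    rw [hi₁, one_pow, mul_one] at h
    refine h.trans (add_le_add (htmul_le x hx i₁) ?_)
    calc ε * (∑ j, x j) ^ (m-1) ≤ 1 * (n:ℝ) ^ (m-1) :=
          mul_le_mul hε1 (hsumn x hx) (pow_nonneg (Finset.sum_nonneg fun j _ => (hx j).1) _)
            zero_le_one
      _ = (n:ℝ) ^ (m-1) := one_mul _
  have hSne : ((ε, fun _ => (1:ℝ)) : ℝ × (Fin n → ℝ)) ∈ S := by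
    refine ⟨hε.le, fun i => ⟨zero_le_one, le_refl _⟩, ⟨i0, rfl⟩, fun i => ?_⟩
    simp only [one_pow, mul_one]
    have h1 : 0 ≤ tmul B (fun _ => (1:ℝ)) i := tmul_nonneg hB (fun _ => zero_le_one) i
    have h2 : ε ≤ ε * (∑ _j : Fin n, (1:ℝ)) ^ (m-1) := by
      apply le_mul_of_one_le_right hε.le
      simpa using hnpow
    linarith
  have hcont1 : ∀ i, Continuous (fun x : Fin n → ℝ => tmul B x i) := by
    intro i
    unfold tmul
    exact continuous_finset_sum _ fun f _ =>
      continuous_const.mul (continuous_finset_prod _ fun t _ => continuous_apply (f t))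
  have hSclosed : IsClosed S := by
    have h1 : IsClosed {p : ℝ × (Fin n → ℝ) | 0 ≤ p.1} := isClosed_le continuous_const continuous_fst
    have h2 : IsClosed {p : ℝ × (Fin n → ℝ) | ∀ i, p.2 i ∈ Set.Icc (0:ℝ) 1} := by
      rw [Set.setOf_forall]
      exact isClosed_iInter fun i =>
        IsClosed.preimage ((continuous_apply i).comp continuous_snd) isClosed_Icc
    have h3 : IsClosed {p : ℝ × (Fin n → ℝ) | ∃ i, p.2 i = 1} := by
      rw [Set.setOf_exists]
      exact isClosed_iUnion_of_finite fun i =>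
        isClosed_eq ((continuous_apply i).comp continuous_snd) continuous_const
    have h4 : IsClosed {p : ℝ × (Fin n → ℝ) |
        ∀ i, p.1 * p.2 i ^ (m-1) ≤ tmul B p.2 i + ε * (∑ j, p.2 j) ^ (m-1)} := by
      rw [Set.setOf_forall]
      refine isClosed_iInter fun i => isClosed_le ?_ ?_
      · exact continuous_fst.mul (((continuous_apply i).comp continuous_snd).pow _)
      · exact ((hcont1 i).comp continuous_snd).add (continuous_const.mul
          ((continuous_finset_sum _ fun j _ => (continuous_apply j).comp continuous_snd).pow _))
    exact h1.inter (h2.inter (h3.inter h4))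
  have hScomp : IsCompact S := by
    refine IsCompact.of_isClosed_subset
      ((isCompact_Icc (a := (0:ℝ)) (b := R)).prod
        (isCompact_univ_pi fun _ : Fin n => isCompact_Icc (a := (0:ℝ)) (b := 1))) hSclosed ?_
    rintro ⟨t, x⟩ hp
    exact ⟨⟨hp.1, hRbound _ hp⟩, fun i _ => hp.2.1 i⟩
  obtain ⟨p, hpS, hpmax⟩ := hScomp.exists_isMaxOn ⟨_, hSne⟩ continuous_fst.continuousOn
  have hpS' := hpS
  obtain ⟨ht0, hxIcc, ⟨i₁, hi₁⟩, hineq⟩ := hpS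
  have htε : ε ≤ p.1 := hpmax hSne
  have htpos : 0 < p.1 := lt_of_lt_of_le hε htε
  have hsum1 : (1:ℝ) ≤ ∑ j, p.2 j := by
    rw [← hi₁]
    exact Finset.single_le_sum (fun j _ => (hxIcc j).1) (Finset.mem_univ i₁)
  have hFpos : ∀ i, 0 < tmul B p.2 i + ε * (∑ j, p.2 j) ^ (m-1) := by
    intro i
    have h1 : 0 ≤ tmul B p.2 i := tmul_nonneg hB (fun j => (hxIcc j).1) i
    have h2 : ε ≤ ε * (∑ j, p.2 j) ^ (m-1) :=
      le_mul_of_one_le_right hε.le (one_le_pow₀ hsum1)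
    linarith
  -- the maximizer gives equality
  have heq : ∀ i, tmul B p.2 i + ε * (∑ j, p.2 j) ^ (m-1) = p.1 * p.2 i ^ (m-1) := by
    by_contra hcon
    push_neg at hcon
    obtain ⟨i₀, hi₀⟩ := hcon
    have hlt : p.1 * p.2 i₀ ^ (m-1) < tmul B p.2 i₀ + ε * (∑ j, p.2 j) ^ (m-1) :=
      lt_of_le_of_ne (hineq i₀) (Ne.symm hi₀)
    set w : Fin n → ℝ := fun i =>
      ((tmul B p.2 i + ε * (∑ j, p.2 j) ^ (m-1)) / p.1) ^ (((m-1 : ℕ) : ℝ))⁻¹ with hwdef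
    have hwpos : ∀ i, 0 < w i := fun i =>
      Real.rpow_pos_of_pos (div_pos (hFpos i) htpos) _
    have hw_pow : ∀ i, w i ^ (m-1) = (tmul B p.2 i + ε * (∑ j, p.2 j) ^ (m-1)) / p.1 := by
      intro i
      rw [hwdef]
      exact Real.rpow_inv_natCast_pow (le_of_lt (div_pos (hFpos i) htpos)) hme
    have hwx : ∀ i, p.2 i ≤ w i := by
      intro i
      have h1 : p.2 i ^ (m-1) ≤ w i ^ (m-1) := by
        rw [hw_pow i, le_div_iff₀ htpos, mul_comm]
        exact hineq i
      exact (pow_le_pow_iff_left₀ (hxIcc i).1 (hwpos i).le hme).mp h1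
    have hwi₀ : p.2 i₀ < w i₀ := by
      have h1 : p.2 i₀ ^ (m-1) < w i₀ ^ (m-1) := by
        rw [hw_pow i₀, lt_div_iff₀ htpos, mul_comm]
        exact hlt
      exact (pow_lt_pow_iff_left₀ (hxIcc i₀).1 (hwpos i₀).le hme).mp h1
    have hsumlt : ∑ j, p.2 j < ∑ j, w j :=
      Finset.sum_lt_sum (fun i _ => hwx i) ⟨i₀, Finset.mem_univ _, hwi₀⟩
    have hGgt : ∀ i, p.1 * w i ^ (m-1) < tmul B w i + ε * (∑ j, w j) ^ (m-1) := by
      intro i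
      rw [hw_pow i, mul_div_cancel₀ _ htpos.ne']
      refine add_lt_add_of_le_of_lt (tmul_mono hB (fun j => (hxIcc j).1) hwx i) ?_
      exact mul_lt_mul_of_pos_left
        (pow_lt_pow_left₀ hsumlt (Finset.sum_nonneg fun j _ => (hxIcc j).1) hme) hε
    set t' : ℝ := Finset.univ.inf' hne
      (fun i => (tmul B w i + ε * (∑ j, w j) ^ (m-1)) / w i ^ (m-1)) with ht'def
    have ht' : p.1 < t' := by
      rw [ht'def, Finset.lt_inf'_iff]
      intro i _
      rw [lt_div_iff₀ (pow_pos (hwpos i) _)]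
      exact hGgt i
    set M : ℝ := Finset.univ.sup' hne w with hMdef
    have hMpos : 0 < M := lt_of_lt_of_le (hwpos i0) (Finset.le_sup' w (Finset.mem_univ i0))
    have hq : ((t', fun i => w i / M) : ℝ × (Fin n → ℝ)) ∈ S := by
      refine ⟨(htpos.trans ht').le, fun i => ⟨div_nonneg (hwpos i).le hMpos.le,
        (div_le_one hMpos).mpr (Finset.le_sup' w (Finset.mem_univ i))⟩, ?_, ?_⟩
      · obtain ⟨i₂, -, hi₂⟩ := Finset.exists_mem_eq_sup' hne w
        refine ⟨i₂, ?_⟩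
        show w i₂ / M = 1
        rw [hMdef, hi₂]
        exact div_self (hwpos i₂).ne'
      · intro i
        show t' * (w i / M) ^ (m-1) ≤ tmul B (fun j => w j / M) i + ε * (∑ j, w j / M) ^ (m-1)
        have hdiv : (fun j => w j / M) = fun j => M⁻¹ * w j := by
          funext j; rw [div_eq_mul_inv, mul_comm]
        rw [hdiv, tmul_smul, div_pow]
        have hsum : (∑ j, M⁻¹ * w j) = M⁻¹ * ∑ j, w j := by rw [Finset.mul_sum]
        rw [hsum, mul_pow]
        have h1 : t' ≤ (tmul B w i + ε * (∑ j, w j) ^ (m-1)) / w i ^ (m-1) :=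
          Finset.inf'_le _ (Finset.mem_univ i)
        rw [le_div_iff₀ (pow_pos (hwpos i) _)] at h1
        have hMinv : (0:ℝ) < M⁻¹ ^ (m-1) := pow_pos (inv_pos.mpr hMpos) _
        calc t' * (w i ^ (m-1) / M ^ (m-1))
            = (t' * w i ^ (m-1)) * (M ^ (m-1))⁻¹ := by ring
          _ ≤ (tmul B w i + ε * (∑ j, w j) ^ (m-1)) * (M ^ (m-1))⁻¹ := by
              apply mul_le_mul_of_nonneg_right h1 (inv_nonneg.mpr (pow_nonneg hMpos.le _))
          _ = M⁻¹ ^ (m-1) * tmul B w i + ε * (M⁻¹ ^ (m-1) * (∑ j, w j) ^ (m-1)) := by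
              rw [← inv_pow]; ring
    exact absurd (hpmax hq) (not_le.mpr ht')
  -- positivity of the maximizing vector
  have hxpos : ∀ i, 0 < p.2 i := by
    intro i
    have h1 : 0 < p.1 * p.2 i ^ (m-1) := by rw [← heq i]; exact hFpos i
    rcases lt_or_eq_of_le (hxIcc i).1 with h | h
    · exact h
    · exfalso
      rw [← h, zero_pow hme, mul_zero] at h1
      exact lt_irrefl _ h1
  obtain ⟨i₂, hi₂⟩ := hng p.2 hxpos
  have h3 : η * p.2 i₂ ^ (m-1) ≤ p.1 * p.2 i₂ ^ (m-1) := by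
    rw [← heq i₂]
    have h4 : 0 ≤ ε * (∑ j, p.2 j) ^ (m-1) :=
      mul_nonneg hε.le (pow_nonneg (Finset.sum_nonneg fun j _ => (hxIcc j).1) _)
    linarith
  have hηt : η ≤ p.1 := le_of_mul_le_mul_right h3 (pow_pos (hxpos i₂) _)
  exact ⟨p.1, p.2, hηt, hRbound p hpS', fun i => (hxIcc i).1, fun i => (hxIcc i).2,
    ⟨i₁, hi₁⟩, heq⟩

lemma tmul_continuous (B : Tensor m n) (i : Fin n) :
    Continuous fun x : Fin n → ℝ => tmul B x i := by
  unfold tmul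
  exact continuous_finset_sum _ fun f _ =>
    continuous_const.mul (continuous_finset_prod _ fun t _ => continuous_apply (f t))

lemma exists_pos_vec (hm : 2 ≤ m) (hn : 1 ≤ n) {B : Tensor m n} (hB : TNonneg B)
    {η : ℝ} (hη : 0 < η)
    (hno : ∀ lam : ℂ, IsEigenvalue B lam → ‖lam‖ < η) :
    ∃ u : Fin n → ℝ, (∀ i, 0 < u i) ∧ ∀ i, tmul B u i < η * u i ^ (m-1) := by
  by_contra hcon
  push_neg at hcon
  have hng : ∀ u : Fin n → ℝ, (∀ i, 0 < u i) → ∃ i, η * u i ^ (m-1) ≤ tmul B u i :=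
    fun u hu => hcon u hu
  have hme : m - 1 ≠ 0 := by omega
  set R : ℝ := (∑ i, ∑ f, B i f) + (n:ℝ) ^ (m-1) with hR
  have hsel : ∀ j : ℕ, ∃ (t : ℝ) (x : Fin n → ℝ), η ≤ t ∧ t ≤ R ∧
      (∀ i, 0 ≤ x i) ∧ (∀ i, x i ≤ 1) ∧ (∃ i, x i = 1) ∧
      ∀ i, tmul B x i + (1/((j:ℝ)+1)) * (∑ j', x j') ^ (m-1) = t * x i ^ (m-1) := by
    intro j
    have h1 : (0:ℝ) < 1/((j:ℝ)+1) := by positivity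
    have h2 : (1:ℝ)/((j:ℝ)+1) ≤ 1 := by
      rw [div_le_one (by positivity)]
      simp [Nat.cast_nonneg]
    exact exists_eigen_eps hm hn hB hη hng h1 h2
  choose t x ht1 ht2 hx0 hx1 hx2 heqj using hsel
  set K : Set (Fin n → ℝ) :=
    (Set.univ.pi fun _ : Fin n => Set.Icc (0:ℝ) 1) ∩ {y | ∃ i, y i = 1} with hK
  have hKcomp : IsCompact K := by
    refine (isCompact_univ_pi fun _ => isCompact_Icc).inter_right ?_
    rw [Set.setOf_exists]
    exact isClosed_iUnion_of_finite fun i =>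
      isClosed_eq (continuous_apply i) continuous_const
  have hT : IsCompact ((Set.Icc η R) ×ˢ K) := isCompact_Icc.prod hKcomp
  have hmem : ∀ j, ((t j, x j) : ℝ × (Fin n → ℝ)) ∈ (Set.Icc η R) ×ˢ K :=
    fun j => ⟨⟨ht1 j, ht2 j⟩, ⟨fun i _ => ⟨hx0 j i, hx1 j i⟩, hx2 j⟩⟩
  obtain ⟨q, hq, φ, hφ, hconv⟩ := hT.tendsto_subseq hmem
  have hconv1 : Filter.Tendsto (fun j => t (φ j)) Filter.atTop (nhds q.1) :=
    (continuous_fst.tendsto q).comp hconv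
  have hconv2 : Filter.Tendsto (fun j => x (φ j)) Filter.atTop (nhds q.2) :=
    (continuous_snd.tendsto q).comp hconv
  have hεto : Filter.Tendsto (fun j : ℕ => 1/((φ j : ℝ)+1)) Filter.atTop (nhds 0) :=
    tendsto_one_div_add_atTop_nhds_zero_nat.comp hφ.tendsto_atTop
  have hlim : ∀ i, tmul B q.2 i = q.1 * q.2 i ^ (m-1) := by
    intro i
    have hsumcont : Continuous fun y : Fin n → ℝ => (∑ j', y j') ^ (m-1) :=
      (continuous_finset_sum _ fun j' _ => continuous_apply j').pow _
    have hL : Filter.Tendsto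
        (fun j => tmul B (x (φ j)) i + (1/((φ j : ℝ)+1)) * (∑ j', x (φ j) j') ^ (m-1))
        Filter.atTop (nhds (tmul B q.2 i + 0 * (∑ j', q.2 j') ^ (m-1))) := by
      exact Filter.Tendsto.add (((tmul_continuous B i).tendsto q.2).comp hconv2)
        (Filter.Tendsto.mul hεto ((hsumcont.tendsto q.2).comp hconv2))
    have hRt : Filter.Tendsto
        (fun j => tmul B (x (φ j)) i + (1/((φ j : ℝ)+1)) * (∑ j', x (φ j) j') ^ (m-1))
        Filter.atTop (nhds (q.1 * q.2 i ^ (m-1))) := by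
      have hfe : (fun j => tmul B (x (φ j)) i + (1/((φ j : ℝ)+1)) * (∑ j', x (φ j) j') ^ (m-1))
          = fun j => t (φ j) * (x (φ j) i) ^ (m-1) := funext fun j => heqj (φ j) i
      rw [hfe]
      exact Filter.Tendsto.mul hconv1
        ((((continuous_apply i).pow _).tendsto q.2).comp hconv2)
    have := tendsto_nhds_unique hL hRt
    rw [zero_mul, add_zero] at this
    exact this
  obtain ⟨hq1, hqIcc, ⟨i₁, hi₁⟩⟩ := hq
  have heig : IsEigenvalue B (q.1 : ℂ) := by
    refine ⟨fun i => (q.2 i : ℂ), ?_, ?_⟩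
    · intro h0
      have h1 := congrFun h0 i₁
      rw [hi₁] at h1
      simp at h1
    · intro i
      have h := hlim i
      unfold tmul at h
      have h2 := congrArg (fun r : ℝ => (r : ℂ)) h
      push_cast at h2
      simpa [tmulC] using h2
  have hcontra := hno _ heig
  rw [Complex.norm_real, Real.norm_eq_abs, abs_of_pos (lt_of_lt_of_le hη hq1.1)] at hcontra
  exact absurd hcontra (not_lt.mpr hq1.1)

lemma eig_bound (hn : 1 ≤ n) {B : Tensor m n} (hB : TNonneg B)
    {u : Fin n → ℝ} (hu : ∀ i, 0 < u i) {c : ℝ}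
    (hc : ∀ i, tmul B u i ≤ c * u i ^ (m-1)) {lam : ℂ}
    (h : IsEigenvalue B lam) : ‖lam‖ ≤ c := by
  obtain ⟨x, hx0, hxe⟩ := h
  have hne : (Finset.univ : Finset (Fin n)).Nonempty := ⟨⟨0, hn⟩, Finset.mem_univ _⟩
  obtain ⟨i, -, hmax⟩ := Finset.exists_max_image Finset.univ
    (fun j => ‖x j‖ / u j) hne
  have hxj : ∃ j, x j ≠ 0 := by
    by_contra hcon
    push_neg at hcon
    exact hx0 (funext hcon)
  obtain ⟨j, hj⟩ := hxj
  set t : ℝ := ‖x i‖ / u i with ht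
  have htpos : 0 < t := by
    have h1 : 0 < ‖x j‖ / u j :=
      div_pos (by simpa using hj) (hu j)
    exact lt_of_lt_of_le h1 (hmax j (Finset.mem_univ _))
  have hxi : ‖x i‖ = t * u i := by
    rw [ht, div_mul_cancel₀]
    exact (hu i).ne'
  have hbound : ∀ j, ‖x j‖ ≤ t * u j := by
    intro j
    have := hmax j (Finset.mem_univ _)
    rwa [div_le_iff₀ (hu j)] at this
  have key : ‖lam‖ * (t * u i) ^ (m-1) ≤ c * (t * u i) ^ (m-1) := by
    have h1 : ‖tmulC B x i‖ = ‖lam‖ * (t * u i) ^ (m-1) := by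
      rw [hxe i, norm_mul, norm_pow, hxi]
    have h2 : ‖tmulC B x i‖ ≤ t ^ (m-1) * tmul B u i := by
      unfold tmulC
      refine le_trans (norm_sum_le _ _) ?_
      rw [tmul, Finset.mul_sum]
      apply Finset.sum_le_sum
      intro f _
      rw [norm_mul, Complex.norm_prod, Complex.norm_real, Real.norm_eq_abs, abs_of_nonneg (hB i f)]
      calc B i f * ∏ t', ‖x (f t')‖
          ≤ B i f * ∏ t', (t * u (f t')) := by
            apply mul_le_mul_of_nonneg_left _ (hB i f)
            exact Finset.prod_le_prod (fun _ _ => norm_nonneg _) (fun t' _ => hbound (f t'))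
        _ = t ^ (m-1) * (B i f * ∏ t', u (f t')) := by
            rw [Finset.prod_mul_distrib, Finset.prod_const]; simp; ring
    calc ‖lam‖ * (t * u i) ^ (m-1) = ‖tmulC B x i‖ := h1.symm
      _ ≤ t ^ (m-1) * tmul B u i := h2
      _ ≤ t ^ (m-1) * (c * u i ^ (m-1)) := by
          apply mul_le_mul_of_nonneg_left (hc i) (pow_nonneg htpos.le _)
      _ = c * (t * u i) ^ (m-1) := by rw [mul_pow]; ring
  have hpow : 0 < (t * u i) ^ (m-1) := pow_pos (mul_pos htpos (hu i)) _
  exact le_of_mul_le_mul_right key hpow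

lemma eig_lt_of_rho_lt (hn : 1 ≤ n) {B : Tensor m n} (hB : TNonneg B) {η : ℝ}
    (h : rho B < η) {lam : ℂ} (hl : IsEigenvalue B lam) : ‖lam‖ < η := by
  have hbd : ∀ r ∈ {r : ℝ | ∃ lam : ℂ, IsEigenvalue B lam ∧ r = ‖lam‖},
      r ≤ ∑ i, ∑ f, B i f := by
    rintro r ⟨lam', hl', rfl⟩
    refine eig_bound hn hB (u := fun _ => 1) (fun _ => one_pos) ?_ hl'
    intro i
    simp only [one_pow, mul_one]
    unfold tmul
    calc ∑ f, B i f * ∏ _t : Fin (m-1), (1:ℝ) = ∑ f, B i f := by simp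
      _ ≤ ∑ i', ∑ f, B i' f := Finset.single_le_sum
          (fun i' _ => Finset.sum_nonneg fun f _ => hB i' f) (Finset.mem_univ i)
  have h2 : ‖lam‖ ≤ rho B := le_csSup ⟨_, hbd⟩ ⟨lam, hl, rfl⟩
  linarith

theorem stmt0 {m n : ℕ} (hm : 2 ≤ m) (hn : 1 ≤ n)
    (A : Tensor m n) (hA : StrongM A) (hdiag : UnitDiag A)
    (s k : ℕ) (hs1 : 1 ≤ s) (hs2 : s ≤ n - 1) (hk1 : 1 ≤ k) (hk2 : k ≤ n - 1)
    (α β : Fin n → ℝ)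
    (hα : ∀ i : Fin n, (i : ℕ) + s < n → α i ∈ Set.Icc (0 : ℝ) 1)
    (hβ : ∀ i : Fin n, k ≤ (i : ℕ) → β i ∈ Set.Icc (0 : ℝ) 1) :
    StrongM (precond A α β s k) := by
  have hme : m - 1 ≠ 0 := by omega
  have t0 : Fin (m-1) := ⟨0, by omega⟩
  have hnne : (Finset.univ : Finset (Fin n)).Nonempty := ⟨⟨0, hn⟩, Finset.mem_univ _⟩
  obtain ⟨η, B, hBnn, hρ, hAeq⟩ := hA
  have hη : 0 < η := by
    refine lt_of_le_of_lt (Real.sSup_nonneg ?_) hρ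
    rintro r ⟨lam, -, rfl⟩
    exact norm_nonneg lam
  have hno : ∀ lam : ℂ, IsEigenvalue B lam → ‖lam‖ < η :=
    fun lam hl => eig_lt_of_rho_lt hn hBnn hρ hl
  obtain ⟨u, hu, hub⟩ := exists_pos_vec hm hn hBnn hη hno
  -- basic facts about A
  have hAf : ∀ i f, A i f = η * idT m n i f - B i f := by
    intro i f; rw [hAeq]; rfl
  have hAoff : ∀ i (f : Fin (m-1) → Fin n), ¬(∀ t, f t = i) → A i f ≤ 0 := by
    intro i f hf
    rw [hAf i f]
    unfold idT
    rw [if_neg hf, mul_zero, zero_sub, neg_nonpos]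
    exact hBnn i f
  have hmaj_off : ∀ i j : Fin n, j ≠ i → A i (fun _ => j) ≤ 0 := by
    intro i j hij
    exact hAoff i _ (fun hall => hij (hall t0))
  have hAu : ∀ i, 0 < tmul A u i := by
    intro i
    rw [hAeq, tmul_smul_idT_sub]
    linarith [hub i]
  set P := Pmat A α β s k with hP
  have hPapp : ∀ i j, P i j = (1 : Matrix (Fin n) (Fin n) ℝ) i j
      + Smat A α s i j + Kmat A β k i j := by
    intro i j; rw [hP]; rfl
  have hPdiag : ∀ i, P i i = 1 := by
    intro i
    rw [hPapp]
    unfold Smat Kmat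
    rw [if_neg (by omega), if_neg (by omega), Matrix.one_apply_eq, add_zero, add_zero]
  have hSnn : ∀ i j, 0 ≤ Smat A α s i j := by
    intro i j
    unfold Smat maj
    split_ifs with hc
    · have hjne : j ≠ i := by
        intro hji; rw [hji] at hc; omega
      have hin : (i:ℕ) + s < n := by rw [← hc]; exact j.isLt
      have hαi := hα i hin
      have h2 := mul_nonneg hαi.1 (neg_nonneg.mpr (hmaj_off i j hjne))
      rw [mul_neg] at h2
      exact h2
    · exact le_refl 0
  have hKnn : ∀ i j, 0 ≤ Kmat A β k i j := by
    intro i j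
    unfold Kmat maj
    split_ifs with hc
    · have hjne : j ≠ i := by
        intro hji; rw [hji] at hc; omega
      have hin : k ≤ (i:ℕ) := by omega
      have hβi := hβ i hin
      have h2 := mul_nonneg hβi.1 (neg_nonneg.mpr (hmaj_off i j hjne))
      rw [mul_neg] at h2
      exact h2
    · exact le_refl 0
  have hPnn : ∀ i j, j ≠ i → 0 ≤ P i j := by
    intro i j hij
    rw [hPapp, Matrix.one_apply_ne' (by exact_mod_cast hij)]
    have := hSnn i j; have := hKnn i j; linarith
  have hPle : ∀ i j, j ≠ i → P i j ≤ -(A i (fun _ => j)) := by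
    intro i j hij
    rw [hPapp, Matrix.one_apply_ne' (by exact_mod_cast hij)]
    have hmaj : A i (fun _ => j) ≤ 0 := hmaj_off i j hij
    unfold Smat Kmat maj
    split_ifs with h1 h2 h2
    · exfalso; omega
    · have hin : (i:ℕ) + s < n := by rw [← h1]; exact j.isLt
      have hαi := hα i hin
      have h3 := mul_nonneg (sub_nonneg.mpr hαi.2) (neg_nonneg.mpr hmaj)
      nlinarith [h3]
    · have hin : k ≤ (i:ℕ) := by omega
      have hβi := hβ i hin
      have h3 := mul_nonneg (sub_nonneg.mpr hβi.2) (neg_nonneg.mpr hmaj)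
      nlinarith [h3]
    · linarith
  set C := precond A α β s k with hC
  have hCapp : ∀ i f, C i f = ∑ j, P i j * A j f := by
    intro i f; rw [hC]; rfl
  -- off-diagonal entries of C are nonpositive
  have hCoff : ∀ i (f : Fin (m-1) → Fin n), ¬(∀ t, f t = i) → C i f ≤ 0 := by
    intro i f hf
    rw [hCapp, ← Finset.add_sum_erase _ _ (Finset.mem_univ i), hPdiag, one_mul]
    have hbound : ∑ j ∈ Finset.univ.erase i, P i j * A j f
        ≤ ∑ j ∈ Finset.univ.erase i, P i j * (if ∀ t, f t = j then 1 else 0) := by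
      apply Finset.sum_le_sum
      intro j hj
      have hji : j ≠ i := Finset.mem_erase.mp hj |>.1
      by_cases hfj : ∀ t, f t = j
      · rw [if_pos hfj]
        have : f = fun _ => j := funext hfj
        rw [this, hdiag j]
      · rw [if_neg hfj, mul_zero]
        exact mul_nonpos_of_nonneg_of_nonpos (hPnn i j hji) (hAoff j f hfj)
    by_cases hex : ∃ j₀ : Fin n, j₀ ≠ i ∧ ∀ t, f t = j₀
    · obtain ⟨j₀, hj₀i, hfj₀⟩ := hex
      have hsum : ∑ j ∈ Finset.univ.erase i, P i j * (if ∀ t, f t = j then 1 else 0)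
          = P i j₀ := by
        rw [Finset.sum_eq_single j₀]
        · rw [if_pos hfj₀, mul_one]
        · intro j hj hjj₀
          rw [if_neg, mul_zero]
          intro hfj
          exact hjj₀ ((hfj t0).symm.trans (hfj₀ t0))
        · intro hj₀
          exact absurd (Finset.mem_erase.mpr ⟨hj₀i, Finset.mem_univ _⟩) hj₀
      have hfeq : A i f = A i (fun _ => j₀) := by rw [show f = (fun _ => j₀) from funext hfj₀]
      have h1 := hPle i j₀ hj₀i
      rw [hsum] at hbound
      linarith
    · have hsum : ∑ j ∈ Finset.univ.erase i, P i j * (if ∀ t, f t = j then 1 else 0)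
          = 0 := by
        apply Finset.sum_eq_zero
        intro j hj
        have hji : j ≠ i := Finset.mem_erase.mp hj |>.1
        rw [if_neg (fun hfj => hex ⟨j, hji, hfj⟩), mul_zero]
      rw [hsum] at hbound
      have := hAoff i f hf
      linarith
  -- positivity of C u^{m-1}
  have hCu : ∀ i, 0 < tmul C u i := by
    intro i
    have h1 : tmul C u i = ∑ j, P i j * tmul A u j := by
      rw [hC]; unfold precond; rw [← hP, tmul_mmul]
    rw [h1]
    have h2 : P i i * tmul A u i ≤ ∑ j, P i j * tmul A u j := by
      apply Finset.single_le_sum (f := fun j => P i j * tmul A u j) _ (Finset.mem_univ i)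
      intro j _
      show 0 ≤ P i j * tmul A u j
      by_cases hji : j = i
      · rw [hji, hPdiag, one_mul]; exact (hAu i).le
      · exact mul_nonneg (hPnn i j hji) (hAu j).le
    rw [hPdiag, one_mul] at h2
    exact lt_of_lt_of_le (hAu i) h2
  -- choose the shift η'
  set η' : ℝ := 1 + ∑ i, |C i (fun _ => i)| with hη'def
  have habs_nonneg : (0:ℝ) ≤ ∑ i, |C i (fun _ => i)| :=
    Finset.sum_nonneg fun i _ => abs_nonneg _
  have hη'pos : 0 < η' := by rw [hη'def]; linarith
  have hη'ge : ∀ i, C i (fun _ => i) ≤ η' := by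
    intro i
    have h1 : C i (fun _ => i) ≤ |C i (fun _ => i)| := le_abs_self _
    have h2 : |C i (fun _ => i)| ≤ ∑ i', |C i' (fun _ => i')| :=
      Finset.single_le_sum (f := fun i' => |C i' (fun _ => i')|)
        (fun i' _ => abs_nonneg _) (Finset.mem_univ i)
    rw [hη'def]; linarith
  set B' : Tensor m n := fun i f => η' * idT m n i f - C i f with hB'def
  have hB'nn : TNonneg B' := by
    intro i f
    show 0 ≤ η' * idT m n i f - C i f
    unfold idT
    by_cases hf : ∀ t, f t = i
    · rw [if_pos hf, mul_one]
      have hfeq : C i f = C i (fun _ => i) := by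
        rw [show f = (fun _ => i) from funext hf]
      linarith [hη'ge i]
    · rw [if_neg hf, mul_zero, zero_sub, neg_nonneg]
      exact hCoff i f hf
  have hCeq : C = η' • idT m n - B' := by
    funext i f
    show C i f = η' * idT m n i f - (η' * idT m n i f - C i f)
    ring
  -- bound the spectral radius of B'
  set δ : ℝ := Finset.univ.inf' hnne (fun i => tmul C u i / u i ^ (m-1)) with hδdef
  have hδpos : 0 < δ := by
    rw [hδdef, Finset.lt_inf'_iff]
    intro i _
    exact div_pos (hCu i) (pow_pos (hu i) _)
  have hδle : ∀ i, δ * u i ^ (m-1) ≤ tmul C u i := by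
    intro i
    have h1 : δ ≤ tmul C u i / u i ^ (m-1) := by
      rw [hδdef]; exact Finset.inf'_le _ (Finset.mem_univ i)
    rwa [le_div_iff₀ (pow_pos (hu i) _)] at h1
  have hB'u : ∀ i, tmul B' u i ≤ (η' - δ) * u i ^ (m-1) := by
    intro i
    have hBC : B' = η' • idT m n - C := by
      funext i' f
      show η' * idT m n i' f - C i' f = η' * idT m n i' f - C i' f
      rfl
    rw [hBC, tmul_smul_idT_sub]
    have := hδle i
    nlinarith [pow_pos (hu i) (m-1)]
  have hrho : rho B' < η' := by
    have hbd : ∀ r ∈ {r : ℝ | ∃ lam : ℂ, IsEigenvalue B' lam ∧ r = ‖lam‖},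
        r ≤ max 0 (η' - δ) := by
      rintro r ⟨lam, hl, rfl⟩
      exact le_trans (eig_bound hn hB'nn hu hB'u hl) (le_max_right _ _)
    have h1 : rho B' ≤ max 0 (η' - δ) := Real.sSup_le hbd (le_max_left _ _)
    have h2 : max 0 (η' - δ) < η' := max_lt hη'pos (by linarith)
    exact lt_of_le_of_lt h1 h2
  exact ⟨η', B', hB'nn, hrho, hCeq⟩


end

end MultilinearPaper
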